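/- For every z ≥ 0, z · I_0(z) ≤ 2(1+z) · I_1(z). -/

import Mathlib

/-- Modified Bessel function `I_0(z) = Σ_{k≥0} (z/2)^{2k} / (k!)²`. -/
noncomputable def besselI0 (z : ℝ) : ℝ :=
  ∑' k : ℕ, (z / 2) ^ (2 * k) / ((k.factorial : ℝ) ^ 2)

/-- Modified Bessel function `I_1(z) = Σ_{k≥0} (z/2)^{2k+1} / (k!·(k+1)!)`. -/
noncomputable def besselI1 (z : ℝ) : ℝ :=
  ∑' k : ℕ, (z / 2) ^ (2 * k + 1) / ((k.factorial : ℝ) * ((k + 1).factorial : ℝ))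

/-!
Write `a_k` and `b_k` for the `k`-th terms of `I_0(z)` and `I_1(z)`. Termwise,
`z a_{k+1} ≤ (2 + z) b_{k+1} + z b_k`: expressing everything through `a_k ≥ 0` and `t = z/2`,
this is `t² (t² - (k+1) t + (k+1)(k+2)) ≥ 0`, and the quadratic in `t` has negative
discriminant. Together with `z a_0 ≤ (2 + z) b_0`, summing gives
`z I_0 ≤ (2 + z) I_1 + z I_1`.
-/

noncomputable def besselI0Term (z : ℝ) (k : ℕ) : ℝ :=
  (z / 2) ^ (2 * k) / ((k.factorial : ℝ) ^ 2)

noncomputable def besselI1Term (z : ℝ) (k : ℕ) : ℝ :=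
  (z / 2) ^ (2 * k + 1) / ((k.factorial : ℝ) * ((k + 1).factorial : ℝ))

section Terms

variable (z : ℝ)

lemma besselI0_eq_tsum : besselI0 z = ∑' k, besselI0Term z k := rfl

lemma besselI1_eq_tsum : besselI1 z = ∑' k, besselI1Term z k := rfl

lemma besselI0Term_nonneg (k : ℕ) : 0 ≤ besselI0Term z k := by
  rw [besselI0Term, pow_mul]
  positivity

lemma besselI0Term_succ (k : ℕ) :
    besselI0Term z (k + 1) = (z / 2) ^ 2 / ((k : ℝ) + 1) ^ 2 * besselI0Term z k := by
  simp only [besselI0Term, Nat.factorial_succ]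
  push_cast
  field_simp
  ring

lemma besselI1Term_eq_mul_besselI0Term (k : ℕ) :
    besselI1Term z k = z / 2 / ((k : ℝ) + 1) * besselI0Term z k := by
  simp only [besselI1Term, besselI0Term, Nat.factorial_succ]
  push_cast
  field_simp
  ring

lemma summable_besselI0Term : Summable (besselI0Term z) := by
  refine .of_nonneg_of_le (besselI0Term_nonneg z) (fun k => ?_)
    (Real.summable_pow_div_factorial ((z / 2) ^ 2))
  have hfact : (k.factorial : ℝ) ≤ (k.factorial : ℝ) ^ 2 := by
    nlinarith [(Nat.one_le_cast (α := ℝ)).2 k.factorial_pos]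
  rw [besselI0Term, pow_mul]
  exact div_le_div_of_nonneg_left (by positivity) (by positivity) hfact

lemma summable_besselI1Term : Summable (besselI1Term z) := by
  refine .of_norm_bounded ((summable_besselI0Term z).mul_left |z / 2|) (fun k => ?_)
  rw [besselI1Term_eq_mul_besselI0Term, Real.norm_eq_abs, abs_mul, abs_div,
    abs_of_nonneg (besselI0Term_nonneg z k)]
  have hk : (1 : ℝ) ≤ |(k : ℝ) + 1| := by
    rw [abs_of_pos (by positivity)]
    linarith [k.cast_nonneg (α := ℝ)]
  gcongr
  · exact besselI0Term_nonneg z k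
  · exact div_le_self (abs_nonneg _) hk

lemma mul_besselI0Term_zero_le : z * besselI0Term z 0 ≤ (2 + z) * besselI1Term z 0 := by
  norm_num [besselI0Term, besselI1Term]
  nlinarith [sq_nonneg z]

lemma mul_besselI0Term_succ_le (k : ℕ) :
    z * besselI0Term z (k + 1) ≤ (2 + z) * besselI1Term z (k + 1) + z * besselI1Term z k := by
  set n : ℝ := (k : ℝ) + 1 with hn_def
  set t : ℝ := z / 2
  have hn : 0 < n := by positivity
  have hscalar :
      z * (t ^ 2 / n ^ 2) ≤ (2 + z) * (t / (n + 1) * (t ^ 2 / n ^ 2)) + z * (t / n) := by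
    have hz : z = 2 * t := by ring
    rw [hz, ← sub_nonneg]
    have hquad : 0 ≤ t ^ 2 - n * t + n * (n + 1) := by nlinarith [sq_nonneg (t - n / 2)]
    have key : (2 + 2 * t) * (t / (n + 1) * (t ^ 2 / n ^ 2)) + 2 * t * (t / n)
        - 2 * t * (t ^ 2 / n ^ 2)
        = 2 * t ^ 2 / (n ^ 2 * (n + 1)) * (t ^ 2 - n * t + n * (n + 1)) := by
      field_simp
      ring
    rw [key]
    positivity
  have hb_succ : besselI1Term z (k + 1) = t / (n + 1) * (t ^ 2 / n ^ 2 * besselI0Term z k) := by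
    rw [besselI1Term_eq_mul_besselI0Term, besselI0Term_succ]
    push_cast
    ring
  rw [besselI0Term_succ, hb_succ, besselI1Term_eq_mul_besselI0Term, ← hn_def]
  linarith [mul_le_mul_of_nonneg_right hscalar (besselI0Term_nonneg z k)]

end Terms

theorem besselI0_le_besselI1_general (z : ℝ) :
    z * besselI0 z ≤ 2 * (1 + z) * besselI1 z := by
  have h0 := summable_besselI0Term z
  have h1 := summable_besselI1Term z
  have h1succ : Summable fun k => besselI1Term z (k + 1) := (summable_nat_add_iff 1).2 h1
  calc z * besselI0 z = z * besselI0Term z 0 + ∑' k, z * besselI0Term z (k + 1) := by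
        rw [besselI0_eq_tsum, ← tsum_mul_left, (h0.mul_left z).tsum_eq_zero_add]
    _ ≤ (2 + z) * besselI1Term z 0
          + ∑' k, ((2 + z) * besselI1Term z (k + 1) + z * besselI1Term z k) := by
        gcongr ?_ + ?_
        · exact mul_besselI0Term_zero_le z
        · exact Summable.tsum_le_tsum (mul_besselI0Term_succ_le z)
            (((summable_nat_add_iff 1).2 h0).mul_left z) ((h1succ.mul_left _).add (h1.mul_left z))
    _ = (2 + z) * besselI1 z + z * besselI1 z := by
        rw [(h1succ.mul_left _).tsum_add (h1.mul_left z), tsum_mul_left, tsum_mul_left,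
          ← add_assoc, ← mul_add, ← h1.tsum_eq_zero_add, besselI1_eq_tsum]
    _ = 2 * (1 + z) * besselI1 z := by ring

/-- For every `z ≥ 0`, `z · I_0(z) ≤ 2(1+z) · I_1(z)`. -/
theorem besselI0_le_besselI1 (z : ℝ) (hz : 0 ≤ z) :
    z * besselI0 z ≤ 2 * (1 + z) * besselI1 z :=
  besselI0_le_besselI1_general z
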